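/- For nonnegative reals q_{123}, q_{124}, q_{125}, q_{126}, q_{134}, q_{135}, q_{136}, q_{145}, q_{146}, q_{156}, q_{234}, q_{235}, q_{236}, q_{245}, q_{246}, q_{256}, q_{345}, q_{346}, q_{356}, q_{456} arising as the absolute values of the 3×3 minors of a real 3×6 matrix (i.e., q_{ijk} = |det(a_i, a_j, a_k)| for columns a_1, ..., a_6 ∈ ℝ³), one has (q_{234} + q_{134} + q_{124} + q_{123})(q_{156} + q_{256} + q_{356} + q_{456}) ≤ (q_{125} + q_{135} + q_{145} + q_{235} + q_{245} + q_{345})(q_{126} + q_{136} + q_{146} + q_{236} + q_{246} + q_{346}). -/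
import Mathlib


/-- The determinant of the 3×3 matrix with columns `u`, `v`, `w`. -/
noncomputable def det3 (u v w : Fin 3 → ℝ) : ℝ :=
  Matrix.det !![u 0, v 0, w 0; u 1, v 1, w 1; u 2, v 2, w 2]

/-- `q a i j k` is the absolute value of the 3×3 minor of the 3×6 matrix with
columns `a 0, …, a 5` on the columns `i, j, k`. -/
noncomputable def q (a : Fin 6 → Fin 3 → ℝ) (i j k : Fin 6) : ℝ :=
  |det3 (a i) (a j) (a k)|

lemma sqrt_step (u v s : ℝ) (hs : 0 ≤ s) (h : 4*|u*v| ≤ s^2) : u - v ≤ |u+v| + s := by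
  nlinarith [le_abs_self (u*v), neg_abs_le (u*v), sq_abs (u+v), abs_nonneg (u+v),
    sq_nonneg (u - v), sq_nonneg (|u+v| + s)]

lemma claimC (A B C A' B' C' sa sb sc : ℝ)
    (hR : A - B + C + A' - B' + C' = 0)
    (hsa : 0 ≤ sa) (hsb : 0 ≤ sb) (hsc : 0 ≤ sc)
    (hA2 : 4*|A*A'| ≤ sa^2) (hB2 : 4*|B*B'| ≤ sb^2) (hC2 : 4*|C*C'| ≤ sc^2) :
    |-A + B - C| + |A + C' - B'| + |B - C' - A'| + |C - B' + A'|
      ≤ |A| + |B| + |C| + |A'| + |B'| + |C'| + sa + sb + sc := by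
  have hA2' : 4*|A'*A| ≤ sa^2 := by rw [mul_comm A' A]; exact hA2
  have hB2' : 4*|B'*B| ≤ sb^2 := by rw [mul_comm B' B]; exact hB2
  have hC2' : 4*|C'*C| ≤ sc^2 := by rw [mul_comm C' C]; exact hC2
  have ha1 := sqrt_step A A' sa hsa hA2
  have ha2 : A' - A ≤ |A + A'| + sa := by
    have := sqrt_step A' A sa hsa hA2'; rwa [add_comm A' A] at this
  have hb1 := sqrt_step B B' sb hsb hB2
  have hb2 : B' - B ≤ |B + B'| + sb := by
    have := sqrt_step B' B sb hsb hB2'; rwa [add_comm B' B] at this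
  have hc1 := sqrt_step C C' sc hsc hC2
  have hc2 : C' - C ≤ |C + C'| + sc := by
    have := sqrt_step C' C sc hsc hC2'; rwa [add_comm C' C] at this
  have habsA : |A + A'| ≤ |B| + |B'| + |C| + |C'| := by
    apply abs_le.mpr
    constructor <;>
      [linarith [neg_abs_le B, neg_abs_le B', le_abs_self C, le_abs_self C'];
       linarith [le_abs_self B, le_abs_self B', neg_abs_le C, neg_abs_le C']]
  have habsB : |B + B'| ≤ |A| + |A'| + |C| + |C'| := by
    apply abs_le.mpr
    constructor <;>
      [linarith [neg_abs_le A, neg_abs_le A', neg_abs_le C, neg_abs_le C'];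
       linarith [le_abs_self A, le_abs_self A', le_abs_self C, le_abs_self C']]
  have habsC : |C + C'| ≤ |A| + |A'| + |B| + |B'| := by
    apply abs_le.mpr
    constructor <;>
      [linarith [le_abs_self A, le_abs_self A', neg_abs_le B, neg_abs_le B'];
       linarith [neg_abs_le A, neg_abs_le A', le_abs_self B, le_abs_self B']]
  rcases abs_cases (-A + B - C) with ⟨e1,_⟩|⟨e1,_⟩ <;>
  rcases abs_cases (A + C' - B') with ⟨e2,_⟩|⟨e2,_⟩ <;>
  rcases abs_cases (B - C' - A') with ⟨e3,_⟩|⟨e3,_⟩ <;>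
  rcases abs_cases (C - B' + A') with ⟨e4,_⟩|⟨e4,_⟩ <;>
  rw [e1, e2, e3, e4] <;>
  linarith [le_abs_self A, neg_abs_le A, le_abs_self B, neg_abs_le B,
    le_abs_self C, neg_abs_le C, le_abs_self A', neg_abs_le A',
    le_abs_self B', neg_abs_le B', le_abs_self C', neg_abs_le C',
    ha1, ha2, hb1, hb2, hc1, hc2, habsA, habsB, habsC]

set_option maxHeartbeats 4000000 in
lemma key (X01 X02 X03 X12 X13 X23 Y01 Y02 Y03 Y12 Y13 Y23 z0 z1 z2 z3 D012 D013 D023 D123 : ℝ)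
    (hR : X01*Y23 - X02*Y13 + X03*Y12 + X23*Y01 - X13*Y02 + X12*Y03 = 0)
    (ho0 : D123 * z0 = -(X01*Y23) + X02*Y13 - X03*Y12)
    (ho1 : D023 * z1 = X01*Y23 + X12*Y03 - X13*Y02)
    (ho2 : D013 * z2 = X02*Y13 - X12*Y03 - X23*Y01)
    (ho3 : D012 * z3 = X03*Y12 - X13*Y02 + X23*Y01)
    (hs0 : D012 * z0 = X01*Y02 - X02*Y01)
    (hs1 : D012 * z1 = X01*Y12 - X12*Y01)
    (hs2 : D012 * z2 = X02*Y12 - X12*Y02)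
    (hs3 : D013 * z0 = X01*Y03 - X03*Y01)
    (hs4 : D013 * z1 = X01*Y13 - X13*Y01)
    (hs5 : D013 * z3 = X03*Y13 - X13*Y03)
    (hs6 : D023 * z0 = X02*Y03 - X03*Y02)
    (hs7 : D023 * z2 = X02*Y23 - X23*Y02)
    (hs8 : D023 * z3 = X03*Y23 - X23*Y03)
    (hs9 : D123 * z1 = X12*Y13 - X13*Y12)
    (hs10 : D123 * z2 = X12*Y23 - X23*Y12)
    (hs11 : D123 * z3 = X13*Y23 - X23*Y13)
    :
    (|D123| + |D023| + |D013| + |D012|) * (|z0| + |z1| + |z2| + |z3|)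
      ≤ (|Y01| + |Y02| + |Y03| + |Y12| + |Y13| + |Y23|) * (|X01| + |X02| + |X03| + |X12| + |X13| + |X23|) := by
  have e1 : (|D123| + |D023| + |D013| + |D012|) * (|z0| + |z1| + |z2| + |z3|) = |D012 * z0| + |D012 * z1| + |D012 * z2| + |D012 * z3| + |D013 * z0| + |D013 * z1| + |D013 * z2| + |D013 * z3| + |D023 * z0| + |D023 * z1| + |D023 * z2| + |D023 * z3| + |D123 * z0| + |D123 * z1| + |D123 * z2| + |D123 * z3| := by
    simp only [abs_mul]; ring
  have e2 : (|Y01| + |Y02| + |Y03| + |Y12| + |Y13| + |Y23|) * (|X01| + |X02| + |X03| + |X12| + |X13| + |X23|) = |X01*Y01| + |X01*Y02| + |X01*Y03| + |X01*Y12| + |X01*Y13| + |X01*Y23| + |X02*Y01| + |X02*Y02| + |X02*Y03| + |X02*Y12| + |X02*Y13| + |X02*Y23| + |X03*Y01| + |X03*Y02| + |X03*Y03| + |X03*Y12| + |X03*Y13| + |X03*Y23| + |X12*Y01| + |X12*Y02| + |X12*Y03| + |X12*Y12| + |X12*Y13| + |X12*Y23| + |X13*Y01| + |X13*Y02| + |X13*Y03|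 + |X13*Y12| + |X13*Y13| + |X13*Y23| + |X23*Y01| + |X23*Y02| + |X23*Y03| + |X23*Y12| + |X23*Y13| + |X23*Y23| := by
    simp only [abs_mul]; ring
  have b0 : |D012 * z0| ≤ |X01*Y02| + |X02*Y01| := by
    rw [hs0]; exact abs_sub _ _
  have b1 : |D012 * z1| ≤ |X01*Y12| + |X12*Y01| := by
    rw [hs1]; exact abs_sub _ _
  have b2 : |D012 * z2| ≤ |X02*Y12| + |X12*Y02| := by
    rw [hs2]; exact abs_sub _ _
  have b3 : |D013 * z0| ≤ |X01*Y03| + |X03*Y01| := by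
    rw [hs3]; exact abs_sub _ _
  have b4 : |D013 * z1| ≤ |X01*Y13| + |X13*Y01| := by
    rw [hs4]; exact abs_sub _ _
  have b5 : |D013 * z3| ≤ |X03*Y13| + |X13*Y03| := by
    rw [hs5]; exact abs_sub _ _
  have b6 : |D023 * z0| ≤ |X02*Y03| + |X03*Y02| := by
    rw [hs6]; exact abs_sub _ _
  have b7 : |D023 * z2| ≤ |X02*Y23| + |X23*Y02| := by
    rw [hs7]; exact abs_sub _ _
  have b8 : |D023 * z3| ≤ |X03*Y23| + |X23*Y03| := by
    rw [hs8]; exact abs_sub _ _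
  have b9 : |D123 * z1| ≤ |X12*Y13| + |X13*Y12| := by
    rw [hs9]; exact abs_sub _ _
  have b10 : |D123 * z2| ≤ |X12*Y23| + |X23*Y12| := by
    rw [hs10]; exact abs_sub _ _
  have b11 : |D123 * z3| ≤ |X13*Y23| + |X23*Y13| := by
    rw [hs11]; exact abs_sub _ _
  have hg0 : 4*|(X01*Y23)*(X23*Y01)| ≤ (|X01*Y01| + |X23*Y23|)^2 := by
    rw [show (X01*Y23)*(X23*Y01) = (X01*Y01)*(X23*Y23) by ring, abs_mul]
    nlinarith [sq_nonneg (|X01*Y01| - |X23*Y23|), abs_nonneg (X01*Y01), abs_nonneg (X23*Y23)]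
  have hg1 : 4*|(X02*Y13)*(X13*Y02)| ≤ (|X02*Y02| + |X13*Y13|)^2 := by
    rw [show (X02*Y13)*(X13*Y02) = (X02*Y02)*(X13*Y13) by ring, abs_mul]
    nlinarith [sq_nonneg (|X02*Y02| - |X13*Y13|), abs_nonneg (X02*Y02), abs_nonneg (X13*Y13)]
  have hg2 : 4*|(X03*Y12)*(X12*Y03)| ≤ (|X03*Y03| + |X12*Y12|)^2 := by
    rw [show (X03*Y12)*(X12*Y03) = (X03*Y03)*(X12*Y12) by ring, abs_mul]
    nlinarith [sq_nonneg (|X03*Y03| - |X12*Y12|), abs_nonneg (X03*Y03), abs_nonneg (X12*Y12)]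
  have bc := claimC (X01*Y23) (X02*Y13) (X03*Y12) (X23*Y01) (X13*Y02) (X12*Y03)
      (|X01*Y01| + |X23*Y23|) (|X02*Y02| + |X13*Y13|) (|X03*Y03| + |X12*Y12|)
      hR (by positivity) (by positivity) (by positivity) hg0 hg1 hg2
  rw [← ho0, ← ho1, ← ho2, ← ho3] at bc
  rw [e1, e2]
  linarith [bc, b0, b1, b2, b3, b4, b5, b6, b7, b8, b9, b10, b11]

set_option maxHeartbeats 4000000 in
theorem stmt_14 (a : Fin 6 → Fin 3 → ℝ)
    (h5 : a 4 = ![1, 0, 0]) (h6 : a 5 = ![0, 1, 0]) :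
    (q a 1 2 3 + q a 0 2 3 + q a 0 1 3 + q a 0 1 2)
      * (q a 0 4 5 + q a 1 4 5 + q a 2 4 5 + q a 3 4 5)
    ≤ (q a 0 1 4 + q a 0 2 4 + q a 0 3 4 + q a 1 2 4 + q a 1 3 4 + q a 2 3 4)
      * (q a 0 1 5 + q a 0 2 5 + q a 0 3 5 + q a 1 2 5 + q a 1 3 5 + q a 2 3 5) := by
  have hq0 : q a 0 1 2 = |(a 0 0 * (a 1 1 * a 2 2 - a 2 1 * a 1 2) - a 1 0 * (a 0 1 * a 2 2 - a 2 1 * a 0 2) + a 2 0 * (a 0 1 * a 1 2 - a 1 1 * a 0 2))| := by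
    simp [q, det3, h5, h6, Matrix.det_fin_three, Matrix.vecHead, Matrix.vecTail]
    rw [abs_eq_abs]
    first | (left; ring) | (right; ring)
  have hq1 : q a 0 1 3 = |(a 0 0 * (a 1 1 * a 3 2 - a 3 1 * a 1 2) - a 1 0 * (a 0 1 * a 3 2 - a 3 1 * a 0 2) + a 3 0 * (a 0 1 * a 1 2 - a 1 1 * a 0 2))| := by
    simp [q, det3, h5, h6, Matrix.det_fin_three, Matrix.vecHead, Matrix.vecTail]
    rw [abs_eq_abs]
    first | (left; ring) | (right; ring)
  have hq2 : q a 0 2 3 = |(a 0 0 * (a 2 1 * a 3 2 - a 3 1 * a 2 2) - a 2 0 * (a 0 1 * a 3 2 - a 3 1 * a 0 2) + a 3 0 * (a 0 1 * a 2 2 - a 2 1 * a 0 2))| := by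
    simp [q, det3, h5, h6, Matrix.det_fin_three, Matrix.vecHead, Matrix.vecTail]
    rw [abs_eq_abs]
    first | (left; ring) | (right; ring)
  have hq3 : q a 1 2 3 = |(a 1 0 * (a 2 1 * a 3 2 - a 3 1 * a 2 2) - a 2 0 * (a 1 1 * a 3 2 - a 3 1 * a 1 2) + a 3 0 * (a 1 1 * a 2 2 - a 2 1 * a 1 2))| := by
    simp [q, det3, h5, h6, Matrix.det_fin_three, Matrix.vecHead, Matrix.vecTail]
    rw [abs_eq_abs]
    first | (left; ring) | (right; ring)
  have hq4 : q a 0 4 5 = |a 0 2| := by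
    simp [q, det3, h5, h6, Matrix.det_fin_three, Matrix.vecHead, Matrix.vecTail]
  have hq5 : q a 1 4 5 = |a 1 2| := by
    simp [q, det3, h5, h6, Matrix.det_fin_three, Matrix.vecHead, Matrix.vecTail]
  have hq6 : q a 2 4 5 = |a 2 2| := by
    simp [q, det3, h5, h6, Matrix.det_fin_three, Matrix.vecHead, Matrix.vecTail]
  have hq7 : q a 3 4 5 = |a 3 2| := by
    simp [q, det3, h5, h6, Matrix.det_fin_three, Matrix.vecHead, Matrix.vecTail]
  have hq8 : q a 0 1 4 = |(a 0 1 * a 1 2 - a 1 1 * a 0 2)| := by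
    simp [q, det3, h5, h6, Matrix.det_fin_three, Matrix.vecHead, Matrix.vecTail]
  have hq9 : q a 0 2 4 = |(a 0 1 * a 2 2 - a 2 1 * a 0 2)| := by
    simp [q, det3, h5, h6, Matrix.det_fin_three, Matrix.vecHead, Matrix.vecTail]
  have hq10 : q a 0 3 4 = |(a 0 1 * a 3 2 - a 3 1 * a 0 2)| := by
    simp [q, det3, h5, h6, Matrix.det_fin_three, Matrix.vecHead, Matrix.vecTail]
  have hq11 : q a 1 2 4 = |(a 1 1 * a 2 2 - a 2 1 * a 1 2)| := by
    simp [q, det3, h5, h6, Matrix.det_fin_three, Matrix.vecHead, Matrix.vecTail]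
  have hq12 : q a 1 3 4 = |(a 1 1 * a 3 2 - a 3 1 * a 1 2)| := by
    simp [q, det3, h5, h6, Matrix.det_fin_three, Matrix.vecHead, Matrix.vecTail]
  have hq13 : q a 2 3 4 = |(a 2 1 * a 3 2 - a 3 1 * a 2 2)| := by
    simp [q, det3, h5, h6, Matrix.det_fin_three, Matrix.vecHead, Matrix.vecTail]
  have hq14 : q a 0 1 5 = |(a 0 0 * a 1 2 - a 1 0 * a 0 2)| := by
    simp [q, det3, h5, h6, Matrix.det_fin_three, Matrix.vecHead, Matrix.vecTail]
    rw [abs_eq_abs]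
    first | (right; ring) | (left; ring)
  have hq15 : q a 0 2 5 = |(a 0 0 * a 2 2 - a 2 0 * a 0 2)| := by
    simp [q, det3, h5, h6, Matrix.det_fin_three, Matrix.vecHead, Matrix.vecTail]
    rw [abs_eq_abs]
    first | (right; ring) | (left; ring)
  have hq16 : q a 0 3 5 = |(a 0 0 * a 3 2 - a 3 0 * a 0 2)| := by
    simp [q, det3, h5, h6, Matrix.det_fin_three, Matrix.vecHead, Matrix.vecTail]
    rw [abs_eq_abs]
    first | (right; ring) | (left; ring)
  have hq17 : q a 1 2 5 = |(a 1 0 * a 2 2 - a 2 0 * a 1 2)| := by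
    simp [q, det3, h5, h6, Matrix.det_fin_three, Matrix.vecHead, Matrix.vecTail]
    rw [abs_eq_abs]
    first | (right; ring) | (left; ring)
  have hq18 : q a 1 3 5 = |(a 1 0 * a 3 2 - a 3 0 * a 1 2)| := by
    simp [q, det3, h5, h6, Matrix.det_fin_three, Matrix.vecHead, Matrix.vecTail]
    rw [abs_eq_abs]
    first | (right; ring) | (left; ring)
  have hq19 : q a 2 3 5 = |(a 2 0 * a 3 2 - a 3 0 * a 2 2)| := by
    simp [q, det3, h5, h6, Matrix.det_fin_three, Matrix.vecHead, Matrix.vecTail]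
    rw [abs_eq_abs]
    first | (right; ring) | (left; ring)
  rw [hq0, hq1, hq2, hq3, hq4, hq5, hq6, hq7, hq8, hq9, hq10, hq11, hq12, hq13, hq14, hq15, hq16, hq17, hq18, hq19]
  exact key (a 0 0 * a 1 2 - a 1 0 * a 0 2) (a 0 0 * a 2 2 - a 2 0 * a 0 2) (a 0 0 * a 3 2 - a 3 0 * a 0 2) (a 1 0 * a 2 2 - a 2 0 * a 1 2) (a 1 0 * a 3 2 - a 3 0 * a 1 2) (a 2 0 * a 3 2 - a 3 0 * a 2 2)
      (a 0 1 * a 1 2 - a 1 1 * a 0 2) (a 0 1 * a 2 2 - a 2 1 * a 0 2) (a 0 1 * a 3 2 - a 3 1 * a 0 2) (a 1 1 * a 2 2 - a 2 1 * a 1 2) (a 1 1 * a 3 2 - a 3 1 * a 1 2) (a 2 1 * a 3 2 - a 3 1 * a 2 2)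
      (a 0 2) (a 1 2) (a 2 2) (a 3 2)
      (a 0 0 * (a 1 1 * a 2 2 - a 2 1 * a 1 2) - a 1 0 * (a 0 1 * a 2 2 - a 2 1 * a 0 2) + a 2 0 * (a 0 1 * a 1 2 - a 1 1 * a 0 2)) (a 0 0 * (a 1 1 * a 3 2 - a 3 1 * a 1 2) - a 1 0 * (a 0 1 * a 3 2 - a 3 1 * a 0 2) + a 3 0 * (a 0 1 * a 1 2 - a 1 1 * a 0 2)) (a 0 0 * (a 2 1 * a 3 2 - a 3 1 * a 2 2) - a 2 0 * (a 0 1 * a 3 2 - a 3 1 * a 0 2) + a 3 0 * (a 0 1 * a 2 2 - a 2 1 * a 0 2)) (a 1 0 * (a 2 1 * a 3 2 - a 3 1 * a 2 2) - a 2 0 * (a 1 1 * a 3 2 - a 3 1 * a 1 2) + a 3 0 * (a 1 1 * a 2 2 - a 2 1 * a 1 2))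
      (by ring) (by ring) (by ring) (by ring) (by ring) (by ring) (by ring) (by ring) (by ring) (by ring) (by ring) (by ring) (by ring) (by ring) (by ring) (by ring) (by ring)
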